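/- Let P and Q be orthogonal projections on a complex Hilbert space H. Then for every ψ ∈ H, the sequence (PQ)ⁿψ converges in norm to Rψ, where R is the orthogonal projection onto ran P ∩ ran Q. In other words, the strong limit of (PQ)ⁿ is the lattice meet P ∧ Q of the projections P and Q. -/

import Mathlib

/-!
With `T = PQ` and `S = T T* = PQP` one has `T^(n+1) = S^n T`, so it suffices to show that `S^n x`
converges for every `x`. Since `S` is self-adjoint with `‖S y‖² ≤ re ⟪y, S y⟫`, the norms `‖S^n x‖`
decrease to some `c ≥ 0`, and `re ⟪S^n x, S^m x⟫ ≥ c²` because this inner product equals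
`‖S^k x‖²` or `re ⟪S^k x, S^(k+1) x⟫ ≥ ‖S^(k+1) x‖²`. Hence
`‖S^n x - S^m x‖² ≤ ‖S^n x‖² + ‖S^m x‖² - 2c² → 0`. The limit `u` is fixed by `PQP`, and a norm
argument puts it in `ran P ∩ ran Q`; as `R P = R Q = R`, also `R u = R ψ`.
-/

variable {H : Type} [NormedAddCommGroup H] [InnerProductSpace ℂ H] [CompleteSpace H]

def IsOrthProj (P : H →L[ℂ] H) : Prop := IsSelfAdjoint P ∧ P * P = P

open Filter Topology RCLike
open scoped InnerProductSpace

section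

variable {𝕜 E : Type*} [RCLike 𝕜] [NormedAddCommGroup E] [InnerProductSpace 𝕜 E]

namespace ContinuousLinearMap

variable {S : E →L[𝕜] E}

theorem norm_apply_le_of_sq_le_re_inner (hS : ∀ y, ‖S y‖ ^ 2 ≤ re ⟪y, S y⟫_𝕜) (y : E) :
    ‖S y‖ ≤ ‖y‖ := by
  have : ‖S y‖ ^ 2 ≤ ‖y‖ * ‖S y‖ :=
    (hS y).trans ((re_le_norm _).trans (norm_inner_le_norm y (S y)))
  nlinarith [norm_nonneg (S y), norm_nonneg y]

theorem antitone_norm_pow_apply (hS : ∀ y, ‖S y‖ ^ 2 ≤ re ⟪y, S y⟫_𝕜) (x : E) :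
    Antitone fun n => ‖(S ^ n) x‖ :=
  antitone_nat_of_succ_le fun n => by
    simpa only [pow_succ', mul_apply_eq_comp] using norm_apply_le_of_sq_le_re_inner hS _

variable [CompleteSpace E]

theorem inner_pow_apply_pow_apply (hsa : IsSelfAdjoint S) (x y : E) (n m : ℕ) :
    ⟪(S ^ n) x, (S ^ m) y⟫_𝕜 = ⟪x, (S ^ (n + m)) y⟫_𝕜 := by
  rw [pow_add, mul_apply_eq_comp]
  exact (hsa.pow n).isSymmetric _ _

theorem sq_le_re_inner_pow_apply_pow_apply (hsa : IsSelfAdjoint S)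
    (hS : ∀ y, ‖S y‖ ^ 2 ≤ re ⟪y, S y⟫_𝕜) (x : E) {c : ℝ} (hc₀ : 0 ≤ c)
    (hc : ∀ k, c ≤ ‖(S ^ k) x‖) (n m : ℕ) : c ^ 2 ≤ re ⟪(S ^ n) x, (S ^ m) x⟫_𝕜 := by
  rw [inner_pow_apply_pow_apply hsa]
  obtain ⟨k, hk | hk⟩ := Nat.even_or_odd' (n + m)
  · rw [hk, two_mul, ← inner_pow_apply_pow_apply hsa, inner_self_eq_norm_sq]
    exact pow_le_pow_left₀ hc₀ (hc k) 2
  · calc c ^ 2 ≤ ‖S ((S ^ k) x)‖ ^ 2 := by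
          rw [← mul_apply_eq_comp, ← pow_succ']
          exact pow_le_pow_left₀ hc₀ (hc (k + 1)) 2
      _ ≤ re ⟪(S ^ k) x, S ((S ^ k) x)⟫_𝕜 := hS _
      _ = re ⟪x, (S ^ (n + m)) x⟫_𝕜 := by
          rw [hk, two_mul, add_assoc, ← inner_pow_apply_pow_apply hsa x x k, pow_succ',
            mul_apply_eq_comp]

theorem cauchySeq_pow_apply (hsa : IsSelfAdjoint S) (hS : ∀ y, ‖S y‖ ^ 2 ≤ re ⟪y, S y⟫_𝕜)
    (x : E) : CauchySeq fun n => (S ^ n) x := by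
  set a : ℕ → ℝ := fun n => ‖(S ^ n) x‖
  have ha : Antitone a := antitone_norm_pow_apply hS x
  have hbdd : BddBelow (Set.range a) := ⟨0, by rintro _ ⟨n, rfl⟩; exact norm_nonneg _⟩
  set c := ⨅ n, a n
  have hc₀ : 0 ≤ c := le_ciInf fun n => norm_nonneg _
  have hc : ∀ n, c ≤ a n := ciInf_le hbdd
  have hlim : Tendsto a atTop (𝓝 c) := tendsto_atTop_ciInf ha hbdd
  refine cauchySeq_of_le_tendsto_0 (fun N => √(2 * (a N ^ 2 - c ^ 2))) (fun n m N hn hm => ?_) ?_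
  · have hdist : dist ((S ^ n) x) ((S ^ m) x) ^ 2 ≤ 2 * (a N ^ 2 - c ^ 2) := by
      have h₁ := sq_le_re_inner_pow_apply_pow_apply hsa hS x hc₀ hc n m
      have h₂ := pow_le_pow_left₀ (norm_nonneg _) (ha hn) 2
      have h₃ := pow_le_pow_left₀ (norm_nonneg _) (ha hm) 2
      rw [dist_eq_norm, norm_sub_sq (𝕜 := 𝕜)]
      linarith
    exact (le_abs_self _).trans (Real.abs_le_sqrt hdist)
  · have := (((hlim.pow 2).sub_const (c ^ 2)).const_mul 2).sqrt
    rwa [sub_self, mul_zero, Real.sqrt_zero] at this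

theorem cauchySeq_pow_mul_star_apply {T : E →L[𝕜] E} (hT : ‖T‖ ≤ 1) (x : E) :
    CauchySeq fun n => ((T * star T) ^ n) x := by
  refine cauchySeq_pow_apply (IsSelfAdjoint.mul_star_self T) (fun y => ?_) x
  rw [mul_apply_eq_comp, star_eq_adjoint, ← adjoint_inner_left, inner_self_eq_norm_sq]
  gcongr
  exact T.le_of_opNorm_le hT _ |>.trans_eq (one_mul _)

end ContinuousLinearMap

namespace Submodule

variable (U V : Submodule 𝕜 E) [U.HasOrthogonalProjection] [V.HasOrthogonalProjection]

theorem mem_inf_of_starProjection_mul_mul_apply_eq_self {u : E}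
    (hu : (U.starProjection * V.starProjection * U.starProjection) u = u) : u ∈ U ⊓ V := by
  simp only [mul_apply_eq_comp] at hu
  have h : ‖u‖ ≤ ‖V.starProjection (U.starProjection u)‖ := by
    conv_lhs => rw [← hu]
    exact norm_starProjection_apply_le _ _
  have hU : u ∈ U := (mem_iff_norm_starProjection U u).2 <|
    (norm_starProjection_apply_le _ _).antisymm (h.trans (norm_starProjection_apply_le _ _))
  rw [starProjection_eq_self_iff.2 hU] at h
  exact ⟨hU, (mem_iff_norm_starProjection V u).2 ((norm_starProjection_apply_le _ _).antisymm h)⟩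

theorem starProjection_inf_mul_pow [(U ⊓ V).HasOrthogonalProjection] (n : ℕ) :
    (U ⊓ V).starProjection * (U.starProjection * V.starProjection) ^ n =
      (U ⊓ V).starProjection := by
  have hU : (U ⊓ V).starProjection * U.starProjection = (U ⊓ V).starProjection :=
    starProjection_comp_starProjection_of_le inf_le_left
  have hV : (U ⊓ V).starProjection * V.starProjection = (U ⊓ V).starProjection :=
    starProjection_comp_starProjection_of_le inf_le_right
  induction n with
  | zero => exact mul_one _
  | succ n ih => rw [pow_succ', ← mul_assoc, ← mul_assoc, hU, hV, ih]

variable [CompleteSpace E]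

theorem tendsto_pow_starProjection_mul_starProjection_apply [(U ⊓ V).HasOrthogonalProjection]
    (x : E) : Tendsto (fun n => ((U.starProjection * V.starProjection) ^ n) x) atTop
      (𝓝 ((U ⊓ V).starProjection x)) := by
  set P := U.starProjection
  set Q := V.starProjection
  set T := P * Q
  have hP : P * P = P := (isIdempotentElem_starProjection U).eq
  have hQ : Q * Q = Q := (isIdempotentElem_starProjection V).eq
  have hT : ‖T‖ ≤ 1 := (norm_mul_le _ _).trans <|
    mul_le_one₀ U.starProjection_norm_le (norm_nonneg _) V.starProjection_norm_le
  have hS : T * star T = P * Q * P := by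
    rw [star_mul, (isSelfAdjoint_starProjection U).star_eq,
      (isSelfAdjoint_starProjection V).star_eq, mul_assoc, ← mul_assoc Q, hQ, mul_assoc]
  have hpow (n : ℕ) : T ^ (n + 1) = (P * Q * P) ^ n * T := by
    have : SemiconjBy T T (P * Q * P) := by
      simp only [SemiconjBy, T, mul_assoc, ← mul_assoc P P, hP]
    rw [pow_succ', (this.pow_right n).eq]
  obtain ⟨u, hu⟩ := cauchySeq_tendsto_of_complete
    (ContinuousLinearMap.cauchySeq_pow_mul_star_apply hT (T x))
  rw [hS] at hu
  have hmem : u ∈ U ⊓ V := mem_inf_of_starProjection_mul_mul_apply_eq_self U V <|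
    isFixedPt_of_tendsto_iterate (by simpa only [FunLike.coe_pow_eq_iterate] using hu)
      (P * Q * P).continuous.continuousAt
  have hTu : Tendsto (fun n => (T ^ (n + 1)) x) atTop (𝓝 u) := by
    simpa only [hpow, mul_apply_eq_comp] using hu
  have hWu : (U ⊓ V).starProjection u = (U ⊓ V).starProjection x := by
    have hconst (n : ℕ) :
        (U ⊓ V).starProjection ((T ^ (n + 1)) x) = (U ⊓ V).starProjection x := by
      rw [← mul_apply_eq_comp, starProjection_inf_mul_pow]
    refine tendsto_nhds_unique (((U ⊓ V).starProjection.continuous.tendsto u).comp hTu) ?_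
    simp only [Function.comp_def, hconst, tendsto_const_nhds]
  rw [← hWu, starProjection_eq_self_iff.2 hmem]
  exact (tendsto_add_atTop_iff_nat 1).1 hTu

end Submodule

end

theorem IsOrthProj.isStarProjection {P : H →L[ℂ] H} (hP : IsOrthProj P) : IsStarProjection P :=
  ⟨hP.2, hP.1⟩

/-- For orthogonal projections `P, Q` and every `ψ ∈ H`, the sequence `(PQ)ⁿψ` converges in
norm to `Rψ`, where `R = P ∧ Q` is the orthogonal projection onto `ran P ∩ ran Q`; i.e. the
strong limit of `(PQ)ⁿ` is the lattice meet `P ∧ Q`. -/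
theorem stmt16 (P Q R : H →L[ℂ] H) (hP : IsOrthProj P) (hQ : IsOrthProj Q)
    (hR : IsOrthProj R)
    (hRr : LinearMap.range (R : H →ₗ[ℂ] H) = LinearMap.range (P : H →ₗ[ℂ] H) ⊓ LinearMap.range (Q : H →ₗ[ℂ] H)) (ψ : H) :
    Filter.Tendsto (fun n : ℕ => ((P * Q) ^ n) ψ) Filter.atTop (nhds (R ψ)) := by
  obtain ⟨U, _, rfl⟩ := isStarProjection_iff_eq_starProjection.1 hP.isStarProjection
  obtain ⟨V, _, rfl⟩ := isStarProjection_iff_eq_starProjection.1 hQ.isStarProjection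
  obtain ⟨W, _, rfl⟩ := isStarProjection_iff_eq_starProjection.1 hR.isStarProjection
  have hW : W = U ⊓ V := by simpa using hRr
  subst hW
  exact Submodule.tendsto_pow_starProjection_mul_starProjection_apply U V ψ
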